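/- arXiv:2009.10998 — 4 statements merged into one kernel-verified Lean document; each statement's English description precedes it below -/
import Mathlib

section
/- Let (W, S) be a Coxeter system and let s₁, …, sₙ be a sequence of simple reflections that is not reduced. Let j be the maximal index such that s₁ ⋯ s_j is reduced. Then there exists a unique index j' < j such that s_{j'} ⋯ s_j = s_{j'+1} ⋯ s_{j+1} in W; consequently s₁ ⋯ sₙ = s₁ ⋯ ŝ_{j'} ⋯ ŝ_{j+1} ⋯ sₙ (omitting the letters at positions j' and j+1). -/
/-! Since `l.take j` is reduced and `l.take (j + 1)` is not, `s = s_{l[j]}` is a right descent of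
the product `w` of `l.take j`. By the strong exchange property `s` then occurs in the right inversion
sequence of `l.take j`, and it occurs exactly once because the word is reduced. The equation
`s_{j'} ⋯ s_{j-1} = s_{j'+1} ⋯ s_j` is a rewriting of "the `j'`-th right inversion is `s`", and
deleting the `j'`-th letter multiplies `w` on the right by that inversion, which gives the
deletion.

Strong exchange comes from the parity of the number of occurrences of a reflection `t` in the
left inversion sequence of a word, which depends only on the product of the word: it is the
sign in the action of `W` on `W × {±1}` where `s_i` sends `(t, ε)` to `(s_i t s_i, ε)`, with `ε`
negated when `t = s_i`. -/

namespace CoxeterSystem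

open List

variable {B W : Type*} [Group W] {M : CoxeterMatrix B} (cs : CoxeterSystem M W)

theorem conj_simple_eq_simple_iff (i : B) (t : W) :
    MulAut.conj (cs.simple i) t = cs.simple i ↔ t = cs.simple i :=
  (MulAut.conj (cs.simple i)).injective.eq_iff' (by simp)

theorem prod_map_alternatingWord_two_mul {N : Type*} [Monoid N] (f : B → N) (i i' : B) (m : ℕ) :
    ((alternatingWord i i' (2 * m)).map f).prod = (f i * f i') ^ m := by
  induction m with
  | zero => simp [alternatingWord]
  | succ m ih =>
    rw [show 2 * (m + 1) = 2 * m + 1 + 1 by ring, alternatingWord_succ', alternatingWord_succ',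
      if_neg (Nat.not_even_two_mul_add_one m), if_pos (even_two_mul m), map_cons, map_cons,
      prod_cons, prod_cons, ih, pow_succ', mul_assoc]

theorem getElem_leftInvSeq_alternatingWord_two_mul (i i' : B) (p k : ℕ) (h : k < 2 * p) :
    (cs.leftInvSeq (alternatingWord i i' (2 * p)))[k]'(by simp; lia) =
      cs.simple i * (cs.simple i' * cs.simple i) ^ k := by
  rw [getElem_leftInvSeq_alternatingWord cs i i' p k h, prod_alternatingWord_eq_mul_pow,
    if_neg (Nat.not_even_two_mul_add_one k), Nat.mul_add_div two_pos, Nat.div_eq_of_lt one_lt_two,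
    add_zero]

theorem even_count_leftInvSeq_alternatingWord [DecidableEq W] (i i' : B) (t : W) :
    Even ((cs.leftInvSeq (alternatingWord i i' (2 * M i i'))).count t) := by
  set L := cs.leftInvSeq (alternatingWord i i' (2 * M i i'))
  have hlen : L.length = 2 * M i i' := by simp [L]
  have hperiodic : L.drop (M i i') = L.take (M i i') := by
    refine ext_getElem (by simp [hlen]; lia) fun k h₁ h₂ => ?_
    simp only [hlen, length_drop, length_take] at h₁ h₂
    simp only [getElem_drop, getElem_take, L, getElem_leftInvSeq_alternatingWord_two_mul cs _ _ _ _
      (show M i i' + k < 2 * M i i' by lia), getElem_leftInvSeq_alternatingWord_two_mul cs _ _ _ _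
      (show k < 2 * M i i' by lia), pow_add, simple_mul_simple_pow', one_mul]
  rw [← take_append_drop (M i i') L, count_append, hperiodic]
  exact ⟨_, rfl⟩

section SignedReflection

variable [DecidableEq W]

def signedReflectionAct (i : B) : Function.End (W × ℤˣ) :=
  fun p => (MulAut.conj (cs.simple i) p.1, if p.1 = cs.simple i then -p.2 else p.2)

theorem prod_map_signedReflectionAct_apply (ω : List B) (t : W) (ε : ℤˣ) :
    (ω.map cs.signedReflectionAct).prod (t, ε) =
      (MulAut.conj (cs.wordProd ω) t,
        (-1) ^ (cs.leftInvSeq ω).count (MulAut.conj (cs.wordProd ω) t) * ε) := by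
  induction ω with
  | nil =>
    simp only [map_nil, prod_nil, wordProd_nil, map_one, MulAut.one_apply, leftInvSeq_nil,
      count_nil, pow_zero, one_mul]
    rfl
  | cons i ω ih =>
    refine (congrArg (cs.signedReflectionAct i) ih).trans ?_
    rw [wordProd_cons, map_mul, MulAut.mul_apply]
    generalize MulAut.conj (cs.wordProd ω) t = u
    have hcount : (cs.leftInvSeq (i :: ω)).count (MulAut.conj (cs.simple i) u) =
        (cs.leftInvSeq ω).count u + if u = cs.simple i then 1 else 0 := by
      simp_rw [leftInvSeq, count_cons, count_map_of_injective _ _ (MulAut.conj _).injective,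
        beq_iff_eq, eq_comm (a := cs.simple i), conj_simple_eq_simple_iff]
    rw [hcount]
    by_cases h : u = cs.simple i
    · simp [signedReflectionAct, h, pow_succ]
    · simp only [signedReflectionAct, if_neg h, add_zero]

theorem isLiftable_signedReflectionAct : M.IsLiftable cs.signedReflectionAct := by
  intro i i'
  funext ⟨t, ε⟩
  have hone : cs.wordProd (alternatingWord i i' (2 * M i i')) = 1 :=
    (prod_map_alternatingWord_two_mul cs.simple i i' _).trans (cs.simple_mul_simple_pow i i')
  rw [← prod_map_alternatingWord_two_mul, prod_map_signedReflectionAct_apply, hone, map_one,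
    MulAut.one_apply, (even_count_leftInvSeq_alternatingWord cs i i' t).neg_one_pow, one_mul]
  rfl

def signedReflectionRep : W →* Function.End (W × ℤˣ) :=
  cs.lift ⟨cs.signedReflectionAct, cs.isLiftable_signedReflectionAct⟩

theorem signedReflectionRep_wordProd (ω : List B) :
    cs.signedReflectionRep (cs.wordProd ω) = (ω.map cs.signedReflectionAct).prod := by
  rw [wordProd, map_list_prod, map_map]
  congr 2
  funext i
  exact lift_apply_simple cs _ i

theorem neg_one_pow_count_leftInvSeq_eq {ω ω' : List B} (h : cs.wordProd ω = cs.wordProd ω')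
    (t : W) :
    (-1 : ℤˣ) ^ (cs.leftInvSeq ω).count t = (-1) ^ (cs.leftInvSeq ω').count t := by
  have hrep := congrFun (congrArg cs.signedReflectionRep h) (MulAut.conj (cs.wordProd ω)⁻¹ t, 1)
  rw [signedReflectionRep_wordProd, signedReflectionRep_wordProd,
    prod_map_signedReflectionAct_apply, prod_map_signedReflectionAct_apply, ← h,
    ← MulAut.mul_apply, ← map_mul, mul_inv_cancel, map_one, MulAut.one_apply] at hrep
  simpa using congrArg Prod.snd hrep

theorem neg_one_pow_count_rightInvSeq_eq {ω ω' : List B} (h : cs.wordProd ω = cs.wordProd ω')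
    (t : W) :
    (-1 : ℤˣ) ^ (cs.rightInvSeq ω).count t = (-1) ^ (cs.rightInvSeq ω').count t := by
  have := cs.neg_one_pow_count_leftInvSeq_eq (ω := ω.reverse) (ω' := ω'.reverse)
    (by rw [wordProd_reverse, wordProd_reverse, h]) t
  rwa [leftInvSeq_reverse, leftInvSeq_reverse, count_reverse, count_reverse] at this

end SignedReflection

theorem simple_mem_rightInvSeq_of_isRightDescent {ω : List B} {i : B}
    (h : cs.IsRightDescent (cs.wordProd ω) i) : cs.simple i ∈ cs.rightInvSeq ω := by
  classical
  obtain ⟨ω', hω', hprod⟩ := cs.exists_isReduced (cs.wordProd ω * cs.simple i)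
  have hnot_mem : cs.simple i ∉ cs.rightInvSeq ω' := fun hmem => by
    have hinv := (cs.isRightInversion_of_mem_rightInvSeq hω' hmem).2
    rw [← hprod, simple_mul_simple_cancel_right] at hinv
    exact hinv.not_gt h
  have hcount : (cs.rightInvSeq (ω'.concat i)).count (cs.simple i) = 1 := by
    rw [rightInvSeq_concat, concat_eq_append, count_append, count_singleton_self,
      count_eq_zero_of_not_mem fun hmem => ?_]
    obtain ⟨t, ht, hconj⟩ := mem_map.mp hmem
    exact hnot_mem ((cs.conj_simple_eq_simple_iff i t).mp hconj ▸ ht)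
  have hparity := cs.neg_one_pow_count_rightInvSeq_eq
    (show cs.wordProd ω = cs.wordProd (ω'.concat i) by
      rw [wordProd_concat, ← hprod, simple_mul_simple_cancel_right]) (cs.simple i)
  rw [hcount, pow_one] at hparity
  by_contra hnot
  rw [count_eq_zero_of_not_mem hnot, pow_zero] at hparity
  exact absurd hparity (by decide)

theorem isRightDescent_of_not_isReduced_concat {ω : List B} {i : B} (hω : cs.IsReduced ω)
    (h : ¬cs.IsReduced (ω.concat i)) : cs.IsRightDescent (cs.wordProd ω) i := by
  rcases cs.length_mul_simple (cs.wordProd ω) i with hlen | hlen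
  · refine absurd ?_ h
    rw [IsReduced, wordProd_concat, hlen, hω.eq, length_concat]
  · exact Nat.lt_of_succ_le hlen.le

theorem getElem_rightInvSeq_eq_simple_iff {ω : List B} {j : ℕ} (hj : j < ω.length) (i : B) :
    (cs.rightInvSeq ω)[j]'(by simpa using hj) = cs.simple i ↔
      cs.wordProd (ω.drop j) = cs.wordProd (ω.drop (j + 1) ++ [i]) := by
  rw [cs.getElem_rightInvSeq ω j hj, getElem?_eq_getElem hj, Option.map_some, Option.getD_some,
    drop_eq_getElem_cons hj, wordProd_cons, wordProd_append, wordProd_singleton, mul_assoc,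
    inv_mul_eq_iff_eq_mul, eq_comm]

theorem getElem_rightInvSeq_take_eq_simple_iff {l : List B} {j j' : ℕ} (hj' : j' < j)
    (hj : j < l.length) :
    (cs.rightInvSeq (l.take j))[j']'(by simp; lia) = cs.simple l[j] ↔
      cs.wordProd ((l.drop j').take (j - j')) =
        cs.wordProd ((l.drop (j' + 1)).take (j - j')) := by
  have hsub : j - j' = j + 1 - (j' + 1) := by lia
  rw [cs.getElem_rightInvSeq_eq_simple_iff (by simp; lia), ← drop_take, hsub, ← drop_take,
    ← take_concat_get hj, concat_eq_append, drop_append_of_le_length (by simp; lia)]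

theorem wordProd_eq_wordProd_eraseIdx_eraseIdx {l : List B} {j j' : ℕ} (hj' : j' < j)
    (hj : j < l.length)
    (h : (cs.rightInvSeq (l.take j))[j']'(by simp; lia) = cs.simple l[j]) :
    cs.wordProd l = cs.wordProd ((l.eraseIdx j).eraseIdx j') := by
  have hdel : cs.wordProd (l.take j) * cs.simple l[j] = cs.wordProd ((l.take j).eraseIdx j') := by
    rw [← h, ← getD_eq_getElem _ 1, wordProd_mul_getD_rightInvSeq]
  calc cs.wordProd l = cs.wordProd (l.take j) * cs.simple l[j] * cs.wordProd (l.drop (j + 1)) := by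
        rw [← wordProd_concat, take_concat_get hj, ← wordProd_append, take_append_drop]
    _ = cs.wordProd ((l.eraseIdx j).eraseIdx j') := by
        rw [hdel, ← wordProd_append, eraseIdx_eq_take_drop_succ l j,
          eraseIdx_append_of_lt_length (by simp; lia)]

end CoxeterSystem

open CoxeterSystem

theorem coxeter_deletion_property_general {B : Type*} {W : Type*} [Group W]
    {M : CoxeterMatrix B} (cs : CoxeterSystem M W)
    (l : List B)
    (j : ℕ) (hj₁ : cs.IsReduced (l.take j)) (hj₂ : ¬ cs.IsReduced (l.take (j + 1))) :
    (∃! j' : ℕ, j' < j ∧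
        cs.wordProd ((l.drop j').take (j - j')) =
          cs.wordProd ((l.drop (j' + 1)).take (j - j'))) ∧
    (∀ j' : ℕ, j' < j →
        cs.wordProd ((l.drop j').take (j - j')) =
          cs.wordProd ((l.drop (j' + 1)).take (j - j')) →
        cs.wordProd l = cs.wordProd ((l.eraseIdx j).eraseIdx j')) := by
  have hj : j < l.length := by
    by_contra! hle
    rw [List.take_of_length_le hle] at hj₁
    exact hj₂ (by rwa [List.take_of_length_le (by lia)])
  have hdescent : cs.IsRightDescent (cs.wordProd (l.take j)) l[j] :=
    cs.isRightDescent_of_not_isReduced_concat hj₁ (by rwa [List.take_concat_get hj])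
  obtain ⟨n, hn, hsn⟩ :=
    List.getElem_of_mem (cs.simple_mem_rightInvSeq_of_isRightDescent hdescent)
  have hnj : n < j := by simpa [hj.le] using hn
  refine ⟨⟨n, ⟨hnj, (cs.getElem_rightInvSeq_take_eq_simple_iff hnj hj).mp hsn⟩, ?_⟩, ?_⟩
  · rintro j' ⟨hj', heq⟩
    have hsj' := (cs.getElem_rightInvSeq_take_eq_simple_iff hj' hj).mpr heq
    exact hj₁.nodup_rightInvSeq.getElem_inj_iff.mp (hsj'.trans hsn.symm)
  · exact fun j' hj' heq => cs.wordProd_eq_wordProd_eraseIdx_eraseIdx hj' hj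
      ((cs.getElem_rightInvSeq_take_eq_simple_iff hj' hj).mpr heq)

theorem coxeter_deletion_property {B : Type*} {W : Type*} [Group W]
    {M : CoxeterMatrix B} (cs : CoxeterSystem M W)
    (l : List B) (hl : ¬ cs.IsReduced l)
    (j : ℕ) (hj₁ : cs.IsReduced (l.take j)) (hj₂ : ¬ cs.IsReduced (l.take (j + 1))) :
    (∃! j' : ℕ, j' < j ∧
        cs.wordProd ((l.drop j').take (j - j')) =
          cs.wordProd ((l.drop (j' + 1)).take (j - j'))) ∧
    (∀ j' : ℕ, j' < j →
        cs.wordProd ((l.drop j').take (j - j')) =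
          cs.wordProd ((l.drop (j' + 1)).take (j - j')) →
        cs.wordProd l = cs.wordProd ((l.eraseIdx j).eraseIdx j')) :=
  coxeter_deletion_property_general cs l j hj₁ hj₂
end

section
/- Let (W, S) be a Coxeter system. Fix w₁ ∈ W and a reflection hyperplane h (i.e., a wall corresponding to a conjugate t of a simple reflection). Assume there exists w₂ ∈ W with w₁ ≤_Pre w₂ (prefix order) such that h separates w₂ from the identity and h is a wall of the chamber of w₂. Let P be the set of elements w ∈ W such that h does not separate 1 from w and w ≤_Pre w₁, ordered by the prefix order. Then P has a unique maximal element. -/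
/-- The prefix (left weak) order on a Coxeter group:
`u ≤_Pre v` iff `ℓ(u) + ℓ(u⁻¹ v) = ℓ(v)`. -/
def CoxeterSystem.lePre {B : Type*} {W : Type*} [Group W] {M : CoxeterMatrix B}
    (cs : CoxeterSystem M W) (u v : W) : Prop :=
  cs.length u + cs.length (u⁻¹ * v) = cs.length v

/-!
Write `t = w₂ s w₂⁻¹` and `v = t w₂ = w₂ s`, so that `ℓ v + 1 = ℓ w₂`. Let `w` be a prefix of
`w₂`, say `w₂ = w c` with lengths adding. Left inversions form a cocycle mod 2: `t` is a left
inversion of `w c` iff exactly one of "`t` is a left inversion of `w`" and "`w⁻¹ t w` is a left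
inversion of `c`" holds. So if `w` lies on the identity side of the wall, `w⁻¹ t w` shortens `c`,
and `v = w (w⁻¹ t w c)` shows that `w` is a prefix of `v`; conversely every prefix of `v` lies on
the identity side. Hence the set in question is the set of common prefixes of `w₁` and `v`, and
its greatest element is their meet in the weak order.

Meets exist: a longest common prefix `m` of `x` and `y` dominates every common prefix `w`, by
induction on `ℓ x` after dividing out a common left descent. The delicate point is that a left
descent `s_d` of `w` is one of `m`: if `s_e` is a descent of `m`, the element of the rank-two
parabolic subgroup `⟨s_d, s_e⟩` having both as descents is a prefix of `x` and of `y`, hence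
(by induction, after dividing by `s_e`) of `m`.

The cocycle, and with it strong exchange, comes from Tits' parity action of `W` on pairs
(element, sign), `s_i • (t, ε) = (s_i t s_i, ε + [t = s_i])`: the sign picked up by `w⁻¹` counts,
mod 2, the occurrences of `t` in the left inversion sequence of any word for `w`.
-/

namespace CoxeterSystem

open List

variable {B W : Type*} [Group W] {M : CoxeterMatrix B} (cs : CoxeterSystem M W)

local prefix:100 "s" => cs.simple
local prefix:100 "π" => cs.wordProd
local prefix:100 "ℓ" => cs.length
local prefix:100 "lis " => cs.leftInvSeq

/-! ### Tits' parity cocycle and strong exchange -/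

open Classical in
noncomputable def parityFlip (i : B) : Equiv.Perm (W × ZMod 2) :=
  Function.Involutive.toPerm (fun p => (s i * p.1 * s i, p.2 + if p.1 = s i then 1 else 0)) <| by
    rintro ⟨x, e⟩
    have hx : s i * x * s i = s i ↔ x = s i := by
      rw [mul_eq_right, mul_eq_one_iff_inv_eq, inv_simple, eq_comm]
    ext
    · simp [mul_assoc]
    · simp only [hx]
      split_ifs <;> simp [add_assoc, ZModModule.add_self]

open Classical in
theorem parityFlip_apply (i : B) (t : W) (e : ZMod 2) :
    cs.parityFlip i (t, e) = (s i * t * s i, e + if t = s i then 1 else 0) :=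
  rfl

open Classical in
theorem parityFlip_prod_reverse_apply (ω : List B) (t : W) (e : ZMod 2) :
    (ω.reverse.map cs.parityFlip).prod (t, e) = ((π ω)⁻¹ * t * π ω, e + (lis ω).count t) := by
  induction ω generalizing t e with
  | nil => simp
  | cons i ω ih =>
    have hcount : (lis (i :: ω)).count t =
        (if t = s i then 1 else 0) + (lis ω).count (s i * t * s i) := by
      rw [leftInvSeq, count_cons, add_comm]
      congr 1
      · by_cases h : t = s i <;> simp [h, Ne.symm]
      · have := count_map_of_injective (lis ω) _ (MulAut.conj (s i)).injective (s i * t * s i)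
        rw [show MulAut.conj (s i) (s i * t * s i) = t by simp [mul_assoc]] at this
        exact this
    simp only [reverse_cons, map_append, prod_append, map_cons, map_nil, prod_cons, prod_nil,
      mul_one, Equiv.Perm.mul_apply, parityFlip_apply]
    rw [ih]
    simp [hcount, wordProd_cons, mul_assoc, add_assoc]

theorem parityFlip_mul_pow (i j : B) (m : ℕ) :
    (cs.parityFlip i * cs.parityFlip j) ^ m =
      ((alternatingWord j i (2 * m)).reverse.map cs.parityFlip).prod := by
  induction m with
  | zero => simp [alternatingWord]
  | succ m ih =>
    rw [pow_succ', ih, show 2 * (m + 1) = 2 * m + 1 + 1 by ring, alternatingWord_succ,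
      alternatingWord_succ]
    simp [mul_assoc]

open Classical in
theorem even_count_leftInvSeq_braid (i j : B) (t : W) :
    Even ((lis (alternatingWord j i (2 * M i j))).count t) := by
  set L := lis (alternatingWord j i (2 * M i j))
  have hlen : L.length = 2 * M i j := by simp [L]
  have hentry : ∀ k (hk : k < L.length), L[k] = s j * (s i * s j) ^ k := by
    intro k hk
    rw [getElem_leftInvSeq_alternatingWord cs j i (M i j) k (by omega),
      prod_alternatingWord_eq_mul_pow]
    have : (2 * k + 1) / 2 = k := by omega
    simp [this]
  have hL : L = L.take (M i j) ++ L.take (M i j) := by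
    apply List.ext_getElem
    · simp [hlen]; omega
    intro k h₁ h₂
    rw [getElem_append]
    split_ifs with hk
    · simp
    · have hk' : M i j ≤ k := by simp only [length_take, hlen] at hk; omega
      obtain ⟨r, rfl⟩ := Nat.exists_eq_add_of_le hk'
      simp [getElem_take, hentry, hlen, pow_add, min_eq_left (show M i j ≤ 2 * M i j by omega)]
  rw [hL, count_append]
  exact ⟨_, rfl⟩

theorem isLiftable_parityFlip : M.IsLiftable cs.parityFlip := by
  intro i j
  ext ⟨t, e⟩ : 1
  rw [parityFlip_mul_pow, parityFlip_prod_reverse_apply, prod_alternatingWord_eq_mul_pow,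
    (ZMod.natCast_eq_zero_iff_even).2 (cs.even_count_leftInvSeq_braid i j t)]
  simp

noncomputable def parityRep : W →* Equiv.Perm (W × ZMod 2) :=
  cs.lift ⟨cs.parityFlip, cs.isLiftable_parityFlip⟩

noncomputable def inversionParity (w t : W) : ZMod 2 := (cs.parityRep w⁻¹ (t, 0)).2

theorem parityRep_inv_wordProd (ω : List B) :
    cs.parityRep (π ω)⁻¹ = (ω.reverse.map cs.parityFlip).prod := by
  rw [← wordProd_reverse, wordProd, map_list_prod, map_map]
  congr 1
  exact map_congr_left fun i _ => cs.lift_apply_simple cs.isLiftable_parityFlip i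

open Classical in
theorem inversionParity_wordProd (ω : List B) (t : W) :
    cs.inversionParity (π ω) t = (lis ω).count t := by
  rw [inversionParity, parityRep_inv_wordProd, parityFlip_prod_reverse_apply, zero_add]

theorem parityRep_inv_apply (w t : W) (e : ZMod 2) :
    cs.parityRep w⁻¹ (t, e) = (w⁻¹ * t * w, e + cs.inversionParity w t) := by
  obtain ⟨ω, rfl⟩ := cs.wordProd_surjective w
  rw [inversionParity_wordProd, parityRep_inv_wordProd, parityFlip_prod_reverse_apply]

theorem inversionParity_mul (x y t : W) :
    cs.inversionParity (x * y) t =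
      cs.inversionParity x t + cs.inversionParity y (x⁻¹ * t * x) := by
  rw [inversionParity, mul_inv_rev, map_mul, Equiv.Perm.mul_apply, parityRep_inv_apply,
    parityRep_inv_apply, zero_add]

theorem inversionParity_one (t : W) : cs.inversionParity 1 t = 0 := by
  simp [inversionParity]

theorem inversionParity_simple_self (i : B) : cs.inversionParity (s i) (s i) = 1 := by
  simpa using cs.inversionParity_wordProd [i] (s i)

theorem inversionParity_self {t : W} (ht : cs.IsReflection t) : cs.inversionParity t t = 1 := by
  obtain ⟨u, i, rfl⟩ := ht
  have hcancel := cs.inversionParity_mul u u⁻¹ (u * s i * u⁻¹)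
  have hsplit := cs.inversionParity_mul (u * s i) u⁻¹ (u * s i * u⁻¹)
  rw [cs.inversionParity_mul u (s i)] at hsplit
  simp only [mul_inv_cancel, inversionParity_one, mul_inv_rev, inv_simple] at hcancel hsplit
  have hconj : u⁻¹ * (u * s i * u⁻¹) * u = s i := by group
  have hconj' : s i * u⁻¹ * (u * s i * u⁻¹) * (u * s i) = s i := by simp [mul_assoc]
  rw [hconj] at hcancel hsplit
  rw [hconj', inversionParity_simple_self] at hsplit
  linear_combination hsplit - hcancel

open Classical in
theorem mem_leftInvSeq_of_inversionParity_eq_one {ω : List B} {t : W}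
    (h : cs.inversionParity (π ω) t = 1) : t ∈ lis ω := by
  rw [inversionParity_wordProd] at h
  refine count_pos_iff.1 (Nat.pos_of_ne_zero fun h0 => ?_)
  simp [h0] at h

theorem length_mul_lt_of_inversionParity_eq_one {t w : W}
    (h : cs.inversionParity w t = 1) : ℓ (t * w) < ℓ w := by
  obtain ⟨ω, hω, rfl⟩ := cs.exists_isReduced w
  exact (cs.isLeftInversion_of_mem_leftInvSeq hω
    (cs.mem_leftInvSeq_of_inversionParity_eq_one h)).2

theorem length_mul_lt_iff_inversionParity {t : W} (ht : cs.IsReflection t) (w : W) :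
    ℓ (t * w) < ℓ w ↔ cs.inversionParity w t = 1 := by
  refine ⟨fun h => ?_, cs.length_mul_lt_of_inversionParity_eq_one⟩
  by_contra hne
  have hsplit := cs.inversionParity_mul t (t * w) t
  rw [← mul_assoc, ht.mul_self, one_mul, ht.inv, ht.mul_self, one_mul,
    cs.inversionParity_self ht] at hsplit
  have : cs.inversionParity (t * w) t = 1 := by
    rw [hsplit] at hne
    generalize cs.inversionParity (t * w) t = a at hne ⊢
    revert a
    decide
  have := cs.length_mul_lt_of_inversionParity_eq_one this
  rw [← mul_assoc, ht.mul_self, one_mul] at this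
  omega

theorem mem_leftInvSeq_of_length_mul_lt {t : W} (ht : cs.IsReflection t) {ω : List B}
    (h : ℓ (t * π ω) < ℓ (π ω)) : t ∈ lis ω :=
  cs.mem_leftInvSeq_of_inversionParity_eq_one ((cs.length_mul_lt_iff_inversionParity ht _).1 h)

theorem length_mul_mul_lt_iff {t : W} (ht : cs.IsReflection t) (x y : W) :
    ℓ (t * (x * y)) < ℓ (x * y) ↔ Xor (ℓ (t * x) < ℓ x) (ℓ (x⁻¹ * t * x * y) < ℓ y) := by
  have ht' : cs.IsReflection (x⁻¹ * t * x) := by simpa using ht.conj x⁻¹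
  rw [cs.length_mul_lt_iff_inversionParity ht, cs.length_mul_lt_iff_inversionParity ht,
    cs.length_mul_lt_iff_inversionParity ht', inversionParity_mul]
  generalize cs.inversionParity x t = a
  generalize cs.inversionParity y (x⁻¹ * t * x) = b
  revert a b
  decide

theorem exists_isReduced_sublist (ω : List B) :
    ∃ ω', ω' <+ ω ∧ cs.IsReduced ω' ∧ π ω' = π ω := by
  induction ω with
  | nil => exact ⟨[], Sublist.slnil, by simp [IsReduced], rfl⟩
  | cons i ω ih =>
    obtain ⟨ρ, hρω, hρ, hπ⟩ := ih
    by_cases hi : ℓ (s i * π ρ) < ℓ (π ρ)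
    · obtain ⟨k, hk, hget⟩ := List.mem_iff_getElem.1
        (cs.mem_leftInvSeq_of_length_mul_lt (cs.isReflection_simple i) hi)
      have herase : s i * π ρ = π (ρ.eraseIdx k) := by
        rw [← cs.getD_leftInvSeq_mul_wordProd, getD_eq_getElem _ _ hk, hget]
      refine ⟨ρ.eraseIdx k, (eraseIdx_sublist ρ k).trans (hρω.trans (sublist_cons_self i ω)),
        ?_, by rw [← herase, hπ, wordProd_cons]⟩
      have hlen := length_eraseIdx_add_one (l := ρ) (i := k) (by simpa using hk)
      have := cs.isLeftDescent_iff.1 hi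
      rw [IsReduced, ← herase]
      unfold IsReduced at hρ
      omega
    · refine ⟨i :: ρ, hρω.cons_cons i, ?_, by rw [wordProd_cons, wordProd_cons, hπ]⟩
      have := cs.not_isLeftDescent_iff.1 hi
      rw [IsReduced, wordProd_cons, length_cons]
      unfold IsReduced at hρ
      omega

/-! ### The prefix order -/

theorem one_lePre (u : W) : cs.lePre 1 u := by
  simp [lePre]

theorem length_le_of_lePre {u v : W} (h : cs.lePre u v) : ℓ u ≤ ℓ v :=
  Nat.le.intro h

theorem lePre_trans {u v w : W} (huv : cs.lePre u v) (hvw : cs.lePre v w) : cs.lePre u w := by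
  have h₁ : ℓ (u⁻¹ * w) ≤ ℓ (u⁻¹ * v) + ℓ (v⁻¹ * w) := by
    simpa [mul_assoc] using cs.length_mul_le (u⁻¹ * v) (v⁻¹ * w)
  have h₂ : ℓ w ≤ ℓ u + ℓ (u⁻¹ * w) := by
    simpa using cs.length_mul_le u (u⁻¹ * w)
  unfold lePre at *
  omega

theorem lePre_antisymm {u v : W} (huv : cs.lePre u v) (hvu : cs.lePre v u) : u = v := by
  have : ℓ (u⁻¹ * v) = 0 := by unfold lePre at *; omega
  rw [cs.length_eq_zero_iff, inv_mul_eq_one] at this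
  exact this

theorem length_mul_lt_of_lePre {t u v : W} (huv : cs.lePre u v) (ht : ℓ (t * u) < ℓ u) :
    ℓ (t * v) < ℓ v := by
  have : ℓ (t * v) ≤ ℓ (t * u) + ℓ (u⁻¹ * v) := by
    simpa [mul_assoc] using cs.length_mul_le (t * u) (u⁻¹ * v)
  unfold lePre at huv
  omega

theorem lePre_simple_mul_simple_mul_iff {i : B} {u v : W}
    (h : cs.IsLeftDescent u i ↔ cs.IsLeftDescent v i) :
    cs.lePre (s i * u) (s i * v) ↔ cs.lePre u v := by
  have hinv : (s i * u)⁻¹ * (s i * v) = u⁻¹ * v := by simp [mul_assoc]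
  unfold lePre
  rw [hinv]
  by_cases hu : cs.IsLeftDescent u i
  · have hv := h.1 hu
    rw [isLeftDescent_iff] at hu hv
    omega
  · have hv := mt h.2 hu
    rw [not_isLeftDescent_iff] at hu hv
    omega

theorem lePre_mul_of_length_mul_add_one {t z w : W} (ht : cs.IsReflection t)
    (hz : ℓ (t * z) + 1 = ℓ z) (hwz : cs.lePre w z) (hw : ¬ ℓ (t * w) < ℓ w) :
    cs.lePre w (t * z) := by
  obtain ⟨c, rfl⟩ : ∃ c, z = w * c := ⟨w⁻¹ * z, by simp⟩
  have hc : ℓ (w⁻¹ * t * w * c) < ℓ c := by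
    have := (cs.length_mul_mul_lt_iff ht w c).1 (by omega)
    simpa [Xor, hw] using this
  have hle : ℓ (t * (w * c)) ≤ ℓ w + ℓ (w⁻¹ * (t * (w * c))) := by
    simpa using cs.length_mul_le w (w⁻¹ * (t * (w * c)))
  have heq : w⁻¹ * (t * (w * c)) = w⁻¹ * t * w * c := by group
  unfold lePre at *
  rw [heq] at hle ⊢
  simp only [inv_mul_cancel_left] at hwz
  omega

/-! ### Parabolic subgroups -/

def parabolicSubgroup (J : Set B) : Subgroup W := Subgroup.closure (cs.simple '' J)

variable {cs} in
theorem simple_mem_parabolicSubgroup {J : Set B} {i : B} (hi : i ∈ J) :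
    s i ∈ cs.parabolicSubgroup J :=
  Subgroup.subset_closure ⟨i, hi, rfl⟩

theorem exists_isReduced_of_mem_parabolicSubgroup {J : Set B} {w : W}
    (hw : w ∈ cs.parabolicSubgroup J) :
    ∃ ω, (∀ i ∈ ω, i ∈ J) ∧ cs.IsReduced ω ∧ π ω = w := by
  obtain ⟨ω, hωJ, rfl⟩ : ∃ ω : List B, (∀ i ∈ ω, i ∈ J) ∧ π ω = w := by
    induction hw using Subgroup.closure_induction with
    | mem _ h =>
      obtain ⟨i, hi, rfl⟩ := h
      exact ⟨[i], by simpa, by simp⟩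
    | one => exact ⟨[], by simp, rfl⟩
    | mul _ _ _ _ h₁ h₂ =>
      obtain ⟨ω₁, h₁, rfl⟩ := h₁
      obtain ⟨ω₂, h₂, rfl⟩ := h₂
      refine ⟨ω₁ ++ ω₂, fun i hi => ?_, cs.wordProd_append ω₁ ω₂⟩
      rcases mem_append.1 hi with hi | hi
      exacts [h₁ i hi, h₂ i hi]
    | inv _ _ h =>
      obtain ⟨ω, h, rfl⟩ := h
      exact ⟨ω.reverse, fun i hi => h i (mem_reverse.1 hi), cs.wordProd_reverse ω⟩
  obtain ⟨ω', hsub, hred, hπ⟩ := cs.exists_isReduced_sublist ω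
  exact ⟨ω', fun i hi => hωJ i (hsub.subset hi), hred, hπ⟩

theorem exists_isLeftDescent_of_mem_parabolicSubgroup {J : Set B} {w : W}
    (hw : w ∈ cs.parabolicSubgroup J) (hw1 : w ≠ 1) : ∃ i ∈ J, cs.IsLeftDescent w i := by
  obtain ⟨_ | ⟨i, ω⟩, hωJ, hred, rfl⟩ := cs.exists_isReduced_of_mem_parabolicSubgroup hw
  · exact absurd cs.wordProd_nil hw1
  · refine ⟨i, hωJ i mem_cons_self, ?_⟩
    have := cs.length_wordProd_le ω
    unfold IsReduced at hred
    rw [IsLeftDescent, hred, wordProd_cons, simple_mul_simple_cancel_left, length_cons]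
    omega

/-- A shortest element `a₀ * c` of the coset `W_J c` has no reflection of `W_J` as a left
inversion, so if `a₀ ≠ 1`, a descent of `a₀⁻¹` in `J` would be a descent of `c`. -/
theorem length_le_length_mul_of_forall_not_isLeftDescent {J : Set B} {c : W}
    (hc : ∀ i ∈ J, ¬ cs.IsLeftDescent c i) {a : W} (ha : a ∈ cs.parabolicSubgroup J) :
    ℓ c ≤ ℓ (a * c) := by
  obtain ⟨a₀, ha₀, hmin⟩ := (measure fun a => ℓ (a * c)).wf.has_min
    (cs.parabolicSubgroup J : Set W) ⟨1, one_mem _⟩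
  replace hmin : ∀ a ∈ cs.parabolicSubgroup J, ℓ (a₀ * c) ≤ ℓ (a * c) :=
    fun a ha => not_lt.1 (hmin a ha)
  suffices a₀ = 1 by simpa [this] using hmin a ha
  by_contra hne
  obtain ⟨i, hi, hdesc⟩ :=
    cs.exists_isLeftDescent_of_mem_parabolicSubgroup (inv_mem ha₀) (inv_ne_one.2 hne)
  have hconj : ¬ ℓ (a₀⁻¹⁻¹ * s i * a₀⁻¹ * (a₀ * c)) < ℓ (a₀ * c) := by
    have := hmin _ (mul_mem ha₀ (simple_mem_parabolicSubgroup hi))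
    rw [show a₀⁻¹⁻¹ * s i * a₀⁻¹ * (a₀ * c) = a₀ * s i * c by group]
    omega
  have := (cs.length_mul_mul_lt_iff (cs.isReflection_simple i) a₀⁻¹ (a₀ * c)).2
    (Or.inl ⟨hdesc, hconj⟩)
  exact hc i hi (by simpa [IsLeftDescent] using this)

theorem exists_parabolic_factorization (J : Set B) (x : W) :
    ∃ a ∈ cs.parabolicSubgroup J, ∃ c, a * c = x ∧ ℓ a + ℓ c = ℓ x ∧
      ∀ i ∈ J, ¬ cs.IsLeftDescent c i := by
  induction hn : ℓ x using Nat.strong_induction_on generalizing x with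
  | _ n ih =>
  by_cases h : ∃ i ∈ J, cs.IsLeftDescent x i
  · obtain ⟨i, hi, hdesc⟩ := h
    have hx := cs.isLeftDescent_iff.1 hdesc
    obtain ⟨a, ha, c, hac, hlen, hc⟩ := ih _ (by omega) (s i * x) rfl
    refine ⟨s i * a, mul_mem (simple_mem_parabolicSubgroup hi) ha, c,
      by rw [mul_assoc, hac, simple_mul_simple_cancel_left], ?_, hc⟩
    have h₁ := cs.length_mul_le (s i * a) c
    have h₂ := cs.length_mul_le (s i) a
    rw [mul_assoc, hac, simple_mul_simple_cancel_left, length_simple] at *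
    omega
  · simp only [not_exists, not_and] at h
    exact ⟨1, one_mem _, x, one_mul x, by simp [hn], h⟩

theorem exists_lePre_mem_parabolicSubgroup {J : Set B} {x : W}
    (hx : ∀ i ∈ J, cs.IsLeftDescent x i) :
    ∃ p ∈ cs.parabolicSubgroup J, cs.lePre p x ∧ ∀ i ∈ J, cs.IsLeftDescent p i := by
  obtain ⟨a, ha, c, rfl, hlen, hc⟩ := cs.exists_parabolic_factorization J x
  refine ⟨a, ha, by simpa [lePre] using hlen, fun i hi => ?_⟩
  have hmin := cs.length_le_length_mul_of_forall_not_isLeftDescent hc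
    (mul_mem (mul_mem (inv_mem ha) (simple_mem_parabolicSubgroup hi)) ha)
  have := (cs.length_mul_mul_lt_iff (cs.isReflection_simple i) a c).1 (hx i hi)
  simpa [Xor, IsLeftDescent, not_lt.2 hmin] using this

theorem lePre_of_mem_parabolicSubgroup {J : Set B} {p : W} (hp : ∀ i ∈ J, cs.IsLeftDescent p i)
    {b : W} (hb : b ∈ cs.parabolicSubgroup J) : cs.lePre b p := by
  induction hn : ℓ b using Nat.strong_induction_on generalizing b with
  | _ n ih =>
  by_cases hb1 : b = 1
  · exact hb1 ▸ cs.one_lePre p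
  obtain ⟨i, hi, hdesc⟩ := cs.exists_isLeftDescent_of_mem_parabolicSubgroup hb hb1
  have hib : cs.lePre (s i * b) p :=
    ih _ (hn ▸ hdesc) (mul_mem (simple_mem_parabolicSubgroup hi) hb) rfl
  have hwall := cs.lePre_mul_of_length_mul_add_one (cs.isReflection_simple i)
    (cs.isLeftDescent_iff.1 (hp i hi)) hib
    (by rw [simple_mul_simple_cancel_left]; exact not_lt.2 hdesc.le)
  exact (cs.lePre_simple_mul_simple_mul_iff (iff_of_true hdesc (hp i hi))).1 hwall

/-! ### Meets in the prefix order -/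

theorem length_le_of_lePre_simple_mul {i : B} {x y m : W} (hx : cs.IsLeftDescent x i)
    (hy : cs.IsLeftDescent y i) (hm : cs.IsLeftDescent m i)
    (hmax : ∀ w, cs.lePre w x → cs.lePre w y → ℓ w ≤ ℓ m) {w : W}
    (hwx : cs.lePre w (s i * x)) (hwy : cs.lePre w (s i * y)) : ℓ w ≤ ℓ (s i * m) := by
  have hnx : ¬ cs.IsLeftDescent (s i * x) i := by
    rw [IsLeftDescent, simple_mul_simple_cancel_left]; exact not_lt.2 hx.le
  have hny : ¬ cs.IsLeftDescent (s i * y) i := by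
    rw [IsLeftDescent, simple_mul_simple_cancel_left]; exact not_lt.2 hy.le
  have hnw : ¬ cs.IsLeftDescent w i := fun h => hnx (cs.length_mul_lt_of_lePre hwx h)
  have h₁ := (cs.lePre_simple_mul_simple_mul_iff (iff_of_false hnw hnx)).2 hwx
  have h₂ := (cs.lePre_simple_mul_simple_mul_iff (iff_of_false hnw hny)).2 hwy
  rw [simple_mul_simple_cancel_left] at h₁ h₂
  have := hmax _ h₁ h₂
  have := cs.not_isLeftDescent_iff.1 hnw
  have := cs.isLeftDescent_iff.1 hm
  omega

theorem lePre_of_forall_length_le {x y m : W} (hmx : cs.lePre m x) (hmy : cs.lePre m y)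
    (hmax : ∀ w, cs.lePre w x → cs.lePre w y → ℓ w ≤ ℓ m) {w : W}
    (hwx : cs.lePre w x) (hwy : cs.lePre w y) : cs.lePre w m := by
  induction hn : ℓ x using Nat.strong_induction_on generalizing x y m w with
  | _ n ih =>
  have descend : ∀ i, cs.IsLeftDescent x i → cs.IsLeftDescent y i → cs.IsLeftDescent m i →
      ∀ u, cs.lePre u x → cs.lePre u y → cs.IsLeftDescent u i → cs.lePre u m := by
    intro i hx hy hm u hux huy hu
    have quot {a b : W} (ha : cs.IsLeftDescent a i) (hb : cs.IsLeftDescent b i) :=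
      cs.lePre_simple_mul_simple_mul_iff (iff_of_true ha hb)
    exact (quot hu hm).1 <| ih _ (hn ▸ hx) ((quot hm hx).2 hmx) ((quot hm hy).2 hmy)
      (fun _ => cs.length_le_of_lePre_simple_mul hx hy hm hmax)
      ((quot hu hx).2 hux) ((quot hu hy).2 huy) rfl
  by_cases hw1 : w = 1
  · exact hw1 ▸ cs.one_lePre m
  obtain ⟨d, hd⟩ := cs.exists_leftDescent_of_ne_one hw1
  have hdx := cs.length_mul_lt_of_lePre hwx hd
  have hdy := cs.length_mul_lt_of_lePre hwy hd
  suffices hdm : cs.IsLeftDescent m d from descend d hdx hdy hdm w hwx hwy hd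
  have hm1 : m ≠ 1 := by
    rintro rfl
    have := hmax w hwx hwy
    exact hw1 (cs.length_eq_zero_iff.1 (by simpa using this))
  obtain ⟨e, he⟩ := cs.exists_leftDescent_of_ne_one hm1
  have hex := cs.length_mul_lt_of_lePre hmx he
  have hey := cs.length_mul_lt_of_lePre hmy he
  obtain ⟨p, hpJ, hpx, hp⟩ := cs.exists_lePre_mem_parabolicSubgroup (J := {e, d}) (x := x)
    (by rintro i (rfl | rfl) <;> assumption)
  obtain ⟨q, hqJ, hqy, hq⟩ := cs.exists_lePre_mem_parabolicSubgroup (J := {e, d}) (x := y)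
    (by rintro i (rfl | rfl) <;> assumption)
  obtain rfl : p = q :=
    cs.lePre_antisymm (cs.lePre_of_mem_parabolicSubgroup hq hpJ)
      (cs.lePre_of_mem_parabolicSubgroup hp hqJ)
  exact cs.length_mul_lt_of_lePre (descend e hex hey he p hpx hqy (hp e (by simp)))
    (hp d (by simp))

theorem exists_greatest_common_lePre (x y : W) :
    ∃ m, cs.lePre m x ∧ cs.lePre m y ∧ ∀ w, cs.lePre w x → cs.lePre w y → cs.lePre w m := by
  obtain ⟨m, ⟨hmx, hmy⟩, hmin⟩ := (measure fun w => ℓ x - ℓ w).wf.has_min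
    {w | cs.lePre w x ∧ cs.lePre w y} ⟨1, cs.one_lePre x, cs.one_lePre y⟩
  have hmax : ∀ w, cs.lePre w x → cs.lePre w y → ℓ w ≤ ℓ m := by
    intro w hwx hwy
    have : ℓ x - ℓ m ≤ ℓ x - ℓ w := not_lt.1 (hmin w ⟨hwx, hwy⟩)
    have := cs.length_le_of_lePre hwx
    have := cs.length_le_of_lePre hmx
    omega
  exact ⟨m, hmx, hmy, fun w => cs.lePre_of_forall_length_le hmx hmy hmax⟩

end CoxeterSystem

theorem unique_maximal_prefix_off_wall_general {B : Type*} {W : Type*} [Group W]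
    {M : CoxeterMatrix B} (cs : CoxeterSystem M W)
    (w₁ t : W)
    (hexists : ∃ w₂ : W, cs.lePre w₁ w₂ ∧ cs.IsLeftInversion w₂ t ∧
      ∃ i : B, t = w₂ * cs.simple i * w₂⁻¹) :
    ∃! m : W,
      (¬ cs.length (t * m) < cs.length m ∧ cs.lePre m w₁) ∧
      ∀ w : W, (¬ cs.length (t * w) < cs.length w ∧ cs.lePre w w₁) → cs.lePre w m := by
  obtain ⟨w₂, h₁₂, ⟨ht, htw₂⟩, i, hti⟩ := hexists
  have hwall : cs.length (t * w₂) + 1 = cs.length w₂ := by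
    have : t * w₂ = w₂ * cs.simple i := by rw [hti]; group
    rcases cs.length_mul_simple w₂ i with h | h <;> rw [this] at htw₂ ⊢ <;> omega
  have hoff : ∀ w, (¬ cs.length (t * w) < cs.length w ∧ cs.lePre w w₁) ↔
      (cs.lePre w w₁ ∧ cs.lePre w (t * w₂)) := by
    refine fun w => ⟨fun ⟨hw, hww₁⟩ => ⟨hww₁, ?_⟩, fun ⟨hww₁, hw⟩ => ⟨fun htw => ?_, hww₁⟩⟩
    · exact cs.lePre_mul_of_length_mul_add_one ht hwall (cs.lePre_trans hww₁ h₁₂) hw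
    · have := cs.length_mul_lt_of_lePre hw htw
      rw [← mul_assoc, ht.mul_self, one_mul] at this
      omega
  obtain ⟨m, hm₁, hm₂, hmax⟩ := cs.exists_greatest_common_lePre w₁ (t * w₂)
  have hm : ¬ cs.length (t * m) < cs.length m ∧ cs.lePre m w₁ := (hoff m).2 ⟨hm₁, hm₂⟩
  refine ⟨m, ⟨hm, fun w hw => ((hoff w).1 hw).elim (hmax w)⟩, ?_⟩
  rintro m' ⟨hm', hm'max⟩
  exact cs.lePre_antisymm (((hoff m').1 hm').elim (hmax m')) (hm'max m hm)

theorem unique_maximal_prefix_off_wall {B : Type*} {W : Type*} [Group W]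
    {M : CoxeterMatrix B} (cs : CoxeterSystem M W)
    (w₁ t : W) (ht : cs.IsReflection t)
    (hexists : ∃ w₂ : W, cs.lePre w₁ w₂ ∧ cs.IsLeftInversion w₂ t ∧
      ∃ i : B, t = w₂ * cs.simple i * w₂⁻¹) :
    ∃! m : W,
      (¬ cs.length (t * m) < cs.length m ∧ cs.lePre m w₁) ∧
      ∀ w : W, (¬ cs.length (t * w) < cs.length w ∧ cs.lePre w w₁) → cs.lePre w m :=
  unique_maximal_prefix_off_wall_general cs w₁ t hexists
end

section
/- Let (W, S) be a Coxeter system, viewed with the Demazure (0-Hecke) product ★. For any w₁, …, wₙ ∈ W, we have ℓ(w₁ ★ ⋯ ★ wₙ) ≤ ℓ(w₁) + ⋯ + ℓ(wₙ), with equality if and only if the sequence (w₁, …, wₙ) is reduced, i.e., ℓ(w₁ ⋯ wₙ) = ℓ(w₁) + ⋯ + ℓ(wₙ); in that case w₁ ★ ⋯ ★ wₙ = w₁ ⋯ wₙ. -/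
/-!
STATEMENT 4.  Let `(W, S)` be a Coxeter system, equipped with the Demazure
(0-Hecke) product `★`.  For `w₁, …, wₙ ∈ W` (presented by reduced words
`l₁, …, lₙ`), we have `ℓ(w₁ ★ ⋯ ★ wₙ) ≤ ℓ(w₁) + ⋯ + ℓ(wₙ)`, with equality iff
the sequence is reduced, i.e. `ℓ(w₁ ⋯ wₙ) = ℓ(w₁) + ⋯ + ℓ(wₙ)`; and in that
case `w₁ ★ ⋯ ★ wₙ = w₁ ⋯ wₙ`.

The Demazure product of the sequence is computed as the Demazure product of the
concatenated word `l₁ ++ ⋯ ++ lₙ`, via the fold `u ★ s = us` if `ℓ(us) > ℓ(u)`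
and `u ★ s = u` otherwise.
-/

open CoxeterSystem

/-- The Demazure (0-Hecke) product of a word in the simple reflections. -/
noncomputable def CoxeterSystem.demazureWordProd {B : Type*} {W : Type*} [Group W]
    {M : CoxeterMatrix B} (cs : CoxeterSystem M W) (l : List B) : W :=
  l.foldl (fun u i =>
    if cs.length u < cs.length (u * cs.simple i) then u * cs.simple i else u) 1

section Aux
variable {B : Type*} {W : Type*} [Group W] {M : CoxeterMatrix B} (cs : CoxeterSystem M W)

private theorem dem_le (l : List B) : ∀ u : W,
    cs.length (l.foldl (fun u i =>
      if cs.length u < cs.length (u * cs.simple i) then u * cs.simple i else u) u)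
      ≤ cs.length u + l.length := by
  induction l with
  | nil => intro u; simp
  | cons i t ih =>
    intro u
    simp only [List.foldl_cons, List.length_cons]
    split
    · have := ih (u * cs.simple i)
      have h2 := cs.length_mul_le u (cs.simple i)
      simp only [cs.length_simple] at h2
      omega
    · have := ih u; omega

private theorem dem_red (l : List B) : ∀ u : W,
    cs.length (u * cs.wordProd l) = cs.length u + l.length →
    l.foldl (fun u i =>
      if cs.length u < cs.length (u * cs.simple i) then u * cs.simple i else u) u
      = u * cs.wordProd l := by
  induction l with
  | nil => intro u _; simp
  | cons i t ih =>
    intro u h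
    rw [cs.wordProd_cons] at h
    simp only [List.length_cons] at h
    have hle : cs.length (u * cs.simple i * cs.wordProd t)
        ≤ cs.length (u * cs.simple i) + t.length := by
      have := cs.length_mul_le (u * cs.simple i) (cs.wordProd t)
      have := cs.length_wordProd_le t
      omega
    have hgt : cs.length u < cs.length (u * cs.simple i) := by
      rw [← mul_assoc] at h; omega
    simp only [List.foldl_cons, if_pos hgt]
    have heq : cs.length (u * cs.simple i) = cs.length u + 1 := by
      have := cs.length_mul_le u (cs.simple i)
      simp only [cs.length_simple] at this
      omega
    rw [ih (u * cs.simple i) (by rw [← mul_assoc] at h; omega),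
      cs.wordProd_cons, mul_assoc]

private theorem dem_conv (l : List B) : ∀ u : W,
    cs.length (l.foldl (fun u i =>
      if cs.length u < cs.length (u * cs.simple i) then u * cs.simple i else u) u)
      = cs.length u + l.length →
    cs.length (u * cs.wordProd l) = cs.length u + l.length := by
  induction l with
  | nil => intro u _; simp
  | cons i t ih =>
    intro u h
    simp only [List.foldl_cons, List.length_cons] at h
    by_cases hc : cs.length u < cs.length (u * cs.simple i)
    · rw [if_pos hc] at h
      have heq : cs.length (u * cs.simple i) = cs.length u + 1 := by
        have := cs.length_mul_le u (cs.simple i)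
        simp only [cs.length_simple] at this
        omega
      have := ih (u * cs.simple i) (by omega)
      rw [cs.wordProd_cons, ← mul_assoc]
      simp only [List.length_cons]
      omega
    · rw [if_neg hc] at h
      have := dem_le cs t u
      omega

private theorem wordProd_flatten (L : List (List B)) :
    cs.wordProd L.flatten = (L.map fun l => cs.wordProd l).prod := by
  induction L with
  | nil => simp [CoxeterSystem.wordProd_nil]
  | cons l t ih => simp [cs.wordProd_append, ih]

end Aux

theorem demazure_product_length_le {B : Type*} {W : Type*} [Group W]
    {M : CoxeterMatrix B} (cs : CoxeterSystem M W)
    (L : List (List B)) (hred : ∀ l ∈ L, cs.IsReduced l) :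
    cs.length (cs.demazureWordProd L.flatten) ≤
        (L.map fun l => cs.length (cs.wordProd l)).sum ∧
    (cs.length (cs.demazureWordProd L.flatten) =
        (L.map fun l => cs.length (cs.wordProd l)).sum ↔
      cs.length ((L.map fun l => cs.wordProd l).prod) =
        (L.map fun l => cs.length (cs.wordProd l)).sum) ∧
    (cs.length ((L.map fun l => cs.wordProd l).prod) =
        (L.map fun l => cs.length (cs.wordProd l)).sum →
      cs.demazureWordProd L.flatten = (L.map fun l => cs.wordProd l).prod) := by

  have hlen : (L.map fun l => cs.length (cs.wordProd l)).sum = L.flatten.length := by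
    rw [List.length_flatten]
    congr 1
    exact List.map_congr_left fun l hl => hred l hl
  have hprod := wordProd_flatten cs L
  unfold CoxeterSystem.demazureWordProd
  have h1 := dem_le cs L.flatten 1
  simp only [cs.length_one, zero_add] at h1
  refine ⟨by omega, ?_, ?_⟩
  · constructor
    · intro h
      have := dem_conv cs L.flatten 1 (by simpa using h.trans hlen)
      simp only [cs.length_one, zero_add, one_mul] at this
      rw [← hprod, this, hlen]
    · intro h
      rw [← hprod] at h
      have := dem_red cs L.flatten 1 (by simpa using h.trans hlen)
      simp only [one_mul] at this
      rw [this, h]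
  · intro h
    rw [← hprod] at h ⊢
    have := dem_red cs L.flatten 1 (by simpa using h.trans hlen)
    simpa using this
end

section
/- Let F : S → Δ¹ be a map of simplicial sets. Let Δ_{/S} be the category of simplices of S, and let Δ⁰_{/S}, Δ¹_{/S}, Δ⁰¹_{/S} be its full subcategories of simplices whose image under F is {0}, {1}, Δ¹ respectively. Then the inclusion Δ⁰_{/S} ↪ Δ⁰_{/S} ∪ Δ⁰¹_{/S} admits a right adjoint, sending a simplex σ : Δⁿ → S to its restriction along {0} ×_{Δ¹} Δⁿ ↪ Δⁿ. -/
/-!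
STATEMENT 8.  Let `F : S → Δ¹` be a map of simplicial sets.  Let `Δ_{/S}` be
the category of simplices of `S` (realized as the opposite of the category of
elements of `S`), and let `Δ⁰_{/S}`, `Δ⁰¹_{/S}` be its full subcategories of
simplices whose image under `F` is `{0}`, resp. contains `0` (the union
`Δ⁰_{/S} ∪ Δ⁰¹_{/S}` consists of simplices whose `0`-th vertex maps to `0`).
Then the inclusion `Δ⁰_{/S} ↪ Δ⁰_{/S} ∪ Δ⁰¹_{/S}` admits a right adjoint
(sending a simplex `σ : Δⁿ → S` to its restriction along the initial segment
`{0} ×_{Δ¹} Δⁿ ↪ Δⁿ`).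
-/

open CategoryTheory Simplicial

noncomputable section

variable (S : SSet.{0}) (F : S ⟶ Δ[1])

/-- The category of simplices of `S`, as the opposite of its category of
elements. -/
abbrev SimplexCat : Type _ := (Functor.Elements S)ᵒᵖ

/-- The predicate that all vertices of a simplex map to `0` under `F`
(the simplex lies in `Δ⁰_{/S}`). -/
def allZero (x : SimplexCat S) : Prop :=
  ∀ k, SSet.stdSimplex.asOrderHom (F.app x.unop.1 x.unop.2) k = 0

/-- The predicate that the `0`-th vertex of a simplex maps to `0` under `F`
(the simplex lies in `Δ⁰_{/S} ∪ Δ⁰¹_{/S}`). -/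
def zeroAtZero (x : SimplexCat S) : Prop :=
  SSet.stdSimplex.asOrderHom (F.app x.unop.1 x.unop.2) 0 = 0

/-! Since `F ∘ σ : Δⁿ → Δ¹` is monotone, the vertices of a simplex `σ` lying over `0` form an
initial segment `{0, …, m}`, nonempty when `σ` starts over `0`. A map into `σ` from a simplex
lying entirely over `0` lands in that segment, so it factors through the restriction of `σ` to
`Δᵐ`, uniquely because the segment inclusion is a monomorphism. Thus every object of the larger
subcategory has a coreflection into the smaller one. -/

open Opposite

namespace CategoryTheory

theorem ObjectProperty.isLeftAdjoint_ιOfLE_of_exists_coreflection {C : Type*} [Category C]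
    {P P' : ObjectProperty C} (h : P ≤ P')
    (hP' : ∀ X, P' X → ∃ (Y : C) (_ : P Y) (ε : Y ⟶ X),
      ∀ Z, P Z → Function.Bijective fun f : Z ⟶ Y => f ≫ ε) :
    (ιOfLE h).IsLeftAdjoint := by
  refine Functor.isLeftAdjoint_of_rightAdjointObjIsDefined_eq_top (funext fun X => ?_)
  obtain ⟨Y, hY, ε, hε⟩ := hP' X.obj X.property
  refine eq_true ⟨⟨⟨Y, hY⟩, ⟨{ homEquiv := fun {Z} => ?_, homEquiv_comp := ?_ }⟩⟩⟩
  · exact (P.fullyFaithfulι.homEquiv.trans (Equiv.ofBijective _ (hε _ Z.property))).trans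
      P'.fullyFaithfulι.homEquiv.symm
  · intro Z Z' f g
    apply ObjectProperty.hom_ext
    exact Category.assoc _ _ _

namespace CategoryOfElements

variable {C : Type*} [Category C] {P : Cᵒᵖ ⥤ Type*}

def restrict (x : P.Elementsᵒᵖ) {m : C} (i : m ⟶ x.unop.1.unop) : P.Elementsᵒᵖ :=
  op (P.elementsMk (op m) (P.map i.op x.unop.2))

def restrictHom (x : P.Elementsᵒᵖ) {m : C} (i : m ⟶ x.unop.1.unop) : restrict x i ⟶ x :=
  (homMk _ _ i.op rfl).op

lemma comp_restrictHom_injective (x : P.Elementsᵒᵖ) {m : C} (i : m ⟶ x.unop.1.unop) [Mono i]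
    (y : P.Elementsᵒᵖ) : Function.Injective fun f : y ⟶ restrict x i => f ≫ restrictHom x i := by
  have : Mono (restrictHom x i) := (π P).leftOp.mono_of_mono_map (inferInstanceAs (Mono i))
  exact fun _ _ => (cancel_mono _).mp

lemma exists_comp_restrictHom_eq (x : P.Elementsᵒᵖ) {m : C} (i : m ⟶ x.unop.1.unop)
    {y : P.Elementsᵒᵖ} (g : y ⟶ x) (h : y.unop.1.unop ⟶ m) (hg : h ≫ i = g.unop.1.unop) :
    ∃ f : y ⟶ restrict x i, f ≫ restrictHom x i = g := by
  refine ⟨(homMk _ _ h.op ?_).op, ?_⟩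
  · change P.map h.op (P.map i.op _) = _
    rw [← Functor.map_comp_apply, ← op_comp, hg]
    exact g.unop.2
  · exact Quiver.Hom.unop_inj (ext _ _ _ (congrArg Quiver.Hom.op hg))

end CategoryOfElements

end CategoryTheory

namespace SimplexCategory

def initialSegment {m n : ℕ} (h : m ≤ n) : ⦋m⦌ ⟶ ⦋n⦌ :=
  mkHom (Fin.castLEOrderEmb (Nat.succ_le_succ h) : Fin (m + 1) ↪o Fin (n + 1)).toOrderHom

instance {m n : ℕ} (h : m ≤ n) : Mono (initialSegment h) :=
  mono_iff_injective.mpr (Fin.castLE_injective (Nat.succ_le_succ h))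

lemma exists_comp_initialSegment_eq {a : SimplexCategory} {m n : ℕ} (h : m ≤ n) (f : a ⟶ ⦋n⦌)
    (hf : ∀ k, (f.toOrderHom k : ℕ) ≤ m) : ∃ g : a ⟶ ⦋m⦌, g ≫ initialSegment h = f :=
  ⟨Hom.mk ⟨fun k => ⟨f.toOrderHom k, Nat.lt_succ_of_le (hf k)⟩,
      fun _ _ hkl => f.toOrderHom.monotone hkl⟩, Hom.ext _ _ (OrderHom.ext _ _ rfl)⟩

end SimplexCategory

namespace Fin

def lastZero {n : ℕ} (φ : Fin (n + 1) →o Fin 2) : Fin (n + 1) :=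
  (Finset.univ.filter (φ · = 0)).sup id

lemma le_lastZero_iff {n : ℕ} {φ : Fin (n + 1) →o Fin 2} (hφ : φ 0 = 0) {k : Fin (n + 1)} :
    k ≤ lastZero φ ↔ φ k = 0 := by
  refine ⟨fun hk => ?_, fun hk => Finset.le_sup (f := id) (by simpa using hk)⟩
  obtain ⟨l, hl, hl_eq⟩ :=
    Finset.exists_mem_eq_sup (Finset.univ.filter (φ · = 0)) ⟨0, by simpa using hφ⟩ id
  rw [lastZero, hl_eq] at hk
  exact nonpos_iff_eq_zero.mp ((φ.monotone hk).trans (Finset.mem_filter.mp hl).2.le)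

end Fin

variable {S}

def toΔ1 (x : SimplexCat S) : Fin (x.unop.1.unop.len + 1) →o Fin 2 :=
  SSet.stdSimplex.asOrderHom (F.app x.unop.1 x.unop.2)

lemma toΔ1_apply_of_hom {x y : SimplexCat S} (g : y ⟶ x) (k : Fin (y.unop.1.unop.len + 1)) :
    toΔ1 F y k = toΔ1 F x (g.unop.1.unop.toOrderHom k) := by
  dsimp only [toΔ1]
  conv_lhs => rw [← g.unop.2, NatTrans.naturality_apply]
  rfl

open CategoryOfElements in
theorem exists_allZero_coreflection (x : SimplexCat S) (hx : zeroAtZero S F x) :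
    ∃ (Y : SimplexCat S) (_ : allZero S F Y) (ε : Y ⟶ x),
      ∀ Z, allZero S F Z → Function.Bijective fun f : Z ⟶ Y => f ≫ ε := by
  have hzero : ∀ k, k ≤ Fin.lastZero (toΔ1 F x) ↔ toΔ1 F x k = 0 := fun _ =>
    Fin.le_lastZero_iff hx
  let i : _ ⟶ x.unop.1.unop := SimplexCategory.initialSegment (Fin.lastZero (toΔ1 F x)).is_le
  refine ⟨restrict x i, fun k => ?_, restrictHom x i, fun Z hZ =>
    ⟨comp_restrictHom_injective x i Z, fun g => ?_⟩⟩
  · exact (toΔ1_apply_of_hom F (restrictHom x i) k).trans ((hzero _).mp k.is_le)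
  · obtain ⟨h, hh⟩ := SimplexCategory.exists_comp_initialSegment_eq _ g.unop.1.unop
      fun k => (hzero _).mpr ((toΔ1_apply_of_hom F g k).symm.trans (hZ k))
    exact exists_comp_restrictHom_eq x i g h hh

theorem simplices_inclusion_has_right_adjoint :
    (ObjectProperty.ιOfLE (P := allZero S F) (P' := zeroAtZero S F)
        (fun x (hx : allZero S F x) => (hx 0 : zeroAtZero S F x))).IsLeftAdjoint :=
  ObjectProperty.isLeftAdjoint_ιOfLE_of_exists_coreflection _ (exists_allZero_coreflection F)

end
end
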